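/- Fix an integer N ≥ 2 and positive reals σ_1, …, σ_N. With A the (N−1)×(N−1) symmetric tridiagonal matrix having A_{ii} = σ_i² + σ_{i+1}², A_{i,i+1} = A_{i+1,i} = −σ_{i+1}², and A_{ij} = 0 for |i−j| ≥ 2, and ρ the (N−1)×(N−1) matrix with ρ_{ij} = 2·min(i,j)·(N − max(i,j))/N, define for 1 ≤ k ≤ l ≤ N−1: c_{k,l}(σ) := tr(ρA) − 2(ρAρ)_{kl}/ρ_{kl}. Then c_{k,l}(σ) = ((2(N−1)k − 4(N−k))/(kN))·Σ_{p=1}^{k} σ_p² + (2(N+1)/N)·Σ_{p=k+1}^{l} σ_p² + ((2(N−1)(N−l) − 4l)/((N−l)N))·Σ_{p=l+1}^{N} σ_p². -/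
import Mathlib

namespace CklAux

noncomputable def bb (N : ℕ) (m : Fin (N - 1)) (p : Fin N) : ℝ :=
  if p.1 = m.1 then 1 else if p.1 = m.1 + 1 then -1 else 0

noncomputable def dd (N : ℕ) (i : Fin (N - 1)) (p : Fin N) : ℝ :=
  if p.1 ≤ i.1 then 2 * ((N : ℝ) - (i.1 + 1)) / N else -(2 * ((i.1 : ℝ) + 1) / N)

noncomputable def AM (N : ℕ) (σ : Fin N → ℝ) : Matrix (Fin (N - 1)) (Fin (N - 1)) ℝ := fun i j =>
  if i = j then
    σ ⟨i.1, by have := i.isLt; omega⟩ ^ 2 + σ ⟨i.1 + 1, by have := i.isLt; omega⟩ ^ 2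
  else if i.1 + 1 = j.1 ∨ j.1 + 1 = i.1 then
    -σ ⟨max i.1 j.1, by have := i.isLt; have := j.isLt; omega⟩ ^ 2
  else 0

noncomputable def RM (N : ℕ) : Matrix (Fin (N - 1)) (Fin (N - 1)) ℝ := fun i j =>
  2 * (min (i.1 + 1) (j.1 + 1) : ℕ) * ((N : ℝ) - (max (i.1 + 1) (j.1 + 1) : ℕ)) / N

lemma rho_symm (N : ℕ) (i j : Fin (N - 1)) : RM N i j = RM N j i := by
  unfold RM; rw [min_comm, max_comm]

lemma rho_val (N : ℕ) (i j : Fin (N - 1)) :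
    RM N i j = if j.1 ≤ i.1 then 2 * ((j.1 : ℝ) + 1) * ((N : ℝ) - (i.1 + 1)) / N
      else 2 * ((i.1 : ℝ) + 1) * ((N : ℝ) - (j.1 + 1)) / N := by
  unfold RM
  rcases le_or_gt j.1 i.1 with h | h
  · rw [if_pos h, Nat.min_eq_right (by omega), Nat.max_eq_left (by omega)]
    push_cast; ring
  · rw [if_neg (by omega), Nat.min_eq_left (by omega), Nat.max_eq_right (by omega)]
    push_cast; ring

lemma A_eq (N : ℕ) (σ : Fin N → ℝ) (m j : Fin (N - 1)) :
    AM N σ m j = ∑ p : Fin N, bb N m p * bb N j p * σ p ^ 2 := by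
  have hm : m.1 < N - 1 := m.isLt
  have hj : j.1 < N - 1 := j.isLt
  rcases eq_or_ne m j with rfl | hmj
  · have h0 : m.1 < N := by omega
    have h1 : m.1 + 1 < N := by omega
    have key : ∀ p : Fin N, bb N m p * bb N m p * σ p ^ 2 =
        (if p = (⟨m.1, h0⟩ : Fin N) then σ p ^ 2 else 0) +
        (if p = (⟨m.1 + 1, h1⟩ : Fin N) then σ p ^ 2 else 0) := by
      intro p
      simp only [bb, Fin.ext_iff]
      split_ifs <;> first | ring1 | omega
    rw [Finset.sum_congr rfl fun p _ => key p, Finset.sum_add_distrib,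
      Finset.sum_ite_eq', Finset.sum_ite_eq']
    simp [AM]
  · rcases eq_or_ne (m.1 + 1) j.1 with hadj | hadj
    · have h1 : j.1 < N := by omega
      have key : ∀ p : Fin N, bb N m p * bb N j p * σ p ^ 2 =
          (if p = (⟨j.1, h1⟩ : Fin N) then -σ p ^ 2 else 0) := by
        intro p
        simp only [bb, Fin.ext_iff]
        split_ifs <;> first | ring1 | omega
      rw [Finset.sum_congr rfl fun p _ => key p, Finset.sum_ite_eq']
      have e : (⟨max m.1 j.1, by omega⟩ : Fin N) = ⟨j.1, h1⟩ := by
        apply Fin.ext; simp; omega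
      simp only [AM, if_neg hmj, if_pos (Or.inl hadj), e, Finset.mem_univ, if_pos]
    · rcases eq_or_ne (j.1 + 1) m.1 with hadj2 | hadj2
      · have h1 : m.1 < N := by omega
        have key : ∀ p : Fin N, bb N m p * bb N j p * σ p ^ 2 =
            (if p = (⟨m.1, h1⟩ : Fin N) then -σ p ^ 2 else 0) := by
          intro p
          simp only [bb, Fin.ext_iff]
          split_ifs <;> first | ring1 | omega
        rw [Finset.sum_congr rfl fun p _ => key p, Finset.sum_ite_eq']
        have e : (⟨max m.1 j.1, by omega⟩ : Fin N) = ⟨m.1, h1⟩ := by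
          apply Fin.ext; simp; omega
        simp only [AM, if_neg hmj, if_pos (Or.inr hadj2), e, Finset.mem_univ, if_pos]
      · have hmj' : m.1 ≠ j.1 := by simpa [Fin.ext_iff] using hmj
        rw [Finset.sum_eq_zero, AM]
        · simp only [if_neg hmj]
          rw [if_neg (by omega)]
        · intro p _
          simp only [bb]
          split_ifs <;> first | ring1 | omega

lemma L1 (N : ℕ) (hN : 2 ≤ N) (i : Fin (N - 1)) (p : Fin N) :
    ∑ m : Fin (N - 1), RM N i m * bb N m p = dd N i p := by
  have hi : i.1 < N - 1 := i.isLt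
  have hp : p.1 < N := p.isLt
  rcases Nat.eq_zero_or_pos p.1 with h0 | h0
  · have hm : (0 : ℕ) < N - 1 := by omega
    have key : ∀ m : Fin (N - 1), RM N i m * bb N m p =
        if m = (⟨0, hm⟩ : Fin (N - 1)) then RM N i ⟨0, hm⟩ else 0 := by
      intro m
      rcases eq_or_ne m (⟨0, hm⟩ : Fin (N - 1)) with rfl | hne
      · simp [bb, h0]
      · have : (m : ℕ) ≠ 0 := by simpa [Fin.ext_iff] using hne
        rw [if_neg hne]
        simp only [bb]
        rw [if_neg (by omega), if_neg (by omega), mul_zero]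
    rw [Finset.sum_congr rfl fun m _ => key m, Finset.sum_ite_eq']
    rw [if_pos (Finset.mem_univ _), rho_val, dd]
    simp only [Fin.val_mk]
    split_ifs <;> first | (push_cast; ring1) | omega
  · rcases Nat.lt_or_ge p.1 (N - 1) with hp1 | hp1
    · have hma : p.1 < N - 1 := hp1
      have hmb : p.1 - 1 < N - 1 := by omega
      have hne : (⟨p.1, hma⟩ : Fin (N - 1)) ≠ ⟨p.1 - 1, hmb⟩ := by
        simp only [ne_eq, Fin.mk.injEq]; omega
      have key : ∀ m : Fin (N - 1), RM N i m * bb N m p =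
          (if m = (⟨p.1, hma⟩ : Fin (N - 1)) then RM N i ⟨p.1, hma⟩ else 0) +
          (if m = (⟨p.1 - 1, hmb⟩ : Fin (N - 1)) then -RM N i ⟨p.1 - 1, hmb⟩ else 0) := by
        intro m
        rcases eq_or_ne m (⟨p.1, hma⟩ : Fin (N - 1)) with rfl | h1
        · rw [if_pos rfl, if_neg hne]
          simp only [bb, Fin.val_mk]
          norm_num
        · rcases eq_or_ne m (⟨p.1 - 1, hmb⟩ : Fin (N - 1)) with rfl | h2
          · rw [if_neg h1, if_pos rfl]
            simp only [bb, Fin.val_mk]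
            rw [if_neg (by omega), if_pos (by omega)]; ring
          · have e1 : (m : ℕ) ≠ p.1 := by simpa [Fin.ext_iff, eq_comm] using h1
            have e2 : (m : ℕ) ≠ p.1 - 1 := by simpa [Fin.ext_iff, eq_comm] using h2
            rw [if_neg h1, if_neg h2]
            simp only [bb]
            rw [if_neg (by omega), if_neg (by omega), mul_zero]; ring
      rw [Finset.sum_congr rfl fun m _ => key m, Finset.sum_add_distrib,
        Finset.sum_ite_eq', Finset.sum_ite_eq']
      rw [if_pos (Finset.mem_univ _), if_pos (Finset.mem_univ _), rho_val, rho_val, dd]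
      simp only [Fin.val_mk]
      have hc : ((p.1 - 1 : ℕ) : ℝ) = (p.1 : ℝ) - 1 := by
        rw [Nat.cast_sub h0]; norm_num
      split_ifs <;>
        first
          | omega
          | (rw [hc]; push_cast; ring1)
          | (rw [hc, show ((p.1 : ℝ)) = (i.1 : ℝ) + 1 from by
                exact_mod_cast (by omega : p.1 = i.1 + 1)]; push_cast; ring1)
    · have hpe : p.1 = N - 1 := by omega
      have hmb : N - 2 < N - 1 := by omega
      have key : ∀ m : Fin (N - 1), RM N i m * bb N m p =
          if m = (⟨N - 2, hmb⟩ : Fin (N - 1)) then -RM N i ⟨N - 2, hmb⟩ else 0 := by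
        intro m
        rcases eq_or_ne m (⟨N - 2, hmb⟩ : Fin (N - 1)) with rfl | hne
        · rw [if_pos rfl]
          simp only [bb, Fin.val_mk]
          rw [if_neg (by omega), if_pos (by omega)]; ring
        · have : (m : ℕ) ≠ N - 2 := by simpa [Fin.ext_iff] using hne
          rw [if_neg hne]
          simp only [bb]
          rw [if_neg (by omega), if_neg (by omega), mul_zero]
      rw [Finset.sum_congr rfl fun m _ => key m, Finset.sum_ite_eq']
      rw [if_pos (Finset.mem_univ _), rho_val, dd]
      simp only [Fin.val_mk]
      have hc : ((N - 2 : ℕ) : ℝ) = (N : ℝ) - 2 := by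
        rw [Nat.cast_sub (by omega)]; norm_num
      split_ifs <;>
        first
          | omega
          | (rw [hc]; push_cast; ring1)
          | (rw [hc, show ((i.1 : ℝ)) = (N : ℝ) - 2 from by
                rw [show (i.1 : ℕ) = N - 2 from by omega]; exact_mod_cast hc]; push_cast; ring1)

lemma L2 (N : ℕ) (hN : 2 ≤ N) (p : Fin N) :
    ∑ i : Fin (N - 1), bb N i p * dd N i p = 2 * ((N : ℝ) - 1) / N := by
  have hp : p.1 < N := p.isLt
  rcases Nat.eq_zero_or_pos p.1 with h0 | h0
  · have hm : (0 : ℕ) < N - 1 := by omega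
    have key : ∀ i : Fin (N - 1), bb N i p * dd N i p =
        if i = (⟨0, hm⟩ : Fin (N - 1)) then 2 * ((N : ℝ) - 1) / N else 0 := by
      intro i
      rcases eq_or_ne i (⟨0, hm⟩ : Fin (N - 1)) with rfl | hne
      · rw [if_pos rfl]
        simp only [bb, dd, Fin.val_mk]
        rw [if_pos (by omega), if_pos (by omega)]
        push_cast; ring
      · have : (i : ℕ) ≠ 0 := by simpa [Fin.ext_iff] using hne
        rw [if_neg hne]
        simp only [bb]
        rw [if_neg (by omega), if_neg (by omega), zero_mul]
    rw [Finset.sum_congr rfl fun i _ => key i, Finset.sum_ite_eq', if_pos (Finset.mem_univ _)]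
  · rcases Nat.lt_or_ge p.1 (N - 1) with hp1 | hp1
    · have hma : p.1 < N - 1 := hp1
      have hmb : p.1 - 1 < N - 1 := by omega
      have hne : (⟨p.1, hma⟩ : Fin (N - 1)) ≠ ⟨p.1 - 1, hmb⟩ := by
        simp only [ne_eq, Fin.mk.injEq]; omega
      have hc : ((p.1 - 1 : ℕ) : ℝ) = (p.1 : ℝ) - 1 := by
        rw [Nat.cast_sub h0]; norm_num
      have key : ∀ i : Fin (N - 1), bb N i p * dd N i p =
          (if i = (⟨p.1, hma⟩ : Fin (N - 1)) then 2 * ((N : ℝ) - ((p.1 : ℝ) + 1)) / N else 0) +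
          (if i = (⟨p.1 - 1, hmb⟩ : Fin (N - 1)) then 2 * (p.1 : ℝ) / N else 0) := by
        intro i
        rcases eq_or_ne i (⟨p.1, hma⟩ : Fin (N - 1)) with rfl | h1
        · rw [if_pos rfl, if_neg hne]
          simp only [bb, dd, Fin.val_mk]
          norm_num
        · rcases eq_or_ne i (⟨p.1 - 1, hmb⟩ : Fin (N - 1)) with rfl | h2
          · rw [if_neg h1, if_pos rfl]
            simp only [bb, dd, Fin.val_mk]
            rw [if_neg (by omega), if_pos (by omega), if_neg (by omega), hc]
            push_cast; ring
          · have e1 : (i : ℕ) ≠ p.1 := by simpa [Fin.ext_iff, eq_comm] using h1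
            have e2 : (i : ℕ) ≠ p.1 - 1 := by simpa [Fin.ext_iff, eq_comm] using h2
            rw [if_neg h1, if_neg h2]
            simp only [bb]
            rw [if_neg (by omega), if_neg (by omega), zero_mul, add_zero]
      rw [Finset.sum_congr rfl fun i _ => key i, Finset.sum_add_distrib,
        Finset.sum_ite_eq', Finset.sum_ite_eq', if_pos (Finset.mem_univ _),
        if_pos (Finset.mem_univ _)]
      ring
    · have hpe : p.1 = N - 1 := by omega
      have hmb : N - 2 < N - 1 := by omega
      have hc : ((N - 2 : ℕ) : ℝ) = (N : ℝ) - 2 := by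
        rw [Nat.cast_sub (by omega)]; norm_num
      have key : ∀ i : Fin (N - 1), bb N i p * dd N i p =
          if i = (⟨N - 2, hmb⟩ : Fin (N - 1)) then 2 * ((N : ℝ) - 1) / N else 0 := by
        intro i
        rcases eq_or_ne i (⟨N - 2, hmb⟩ : Fin (N - 1)) with rfl | hne
        · rw [if_pos rfl]
          simp only [bb, dd, Fin.val_mk]
          rw [if_neg (by omega), if_pos (by omega), if_neg (by omega), hc]
          push_cast; ring
        · have : (i : ℕ) ≠ N - 2 := by simpa [Fin.ext_iff] using hne
          rw [if_neg hne]
          simp only [bb]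
          rw [if_neg (by omega), if_neg (by omega), zero_mul]
      rw [Finset.sum_congr rfl fun i _ => key i, Finset.sum_ite_eq', if_pos (Finset.mem_univ _)]

lemma L1' (N : ℕ) (hN : 2 ≤ N) (l : Fin (N - 1)) (p : Fin N) :
    ∑ j : Fin (N - 1), bb N j p * RM N j l = dd N l p := by
  rw [← L1 N hN l p]
  exact Finset.sum_congr rfl fun j _ => by rw [rho_symm N j l]; ring

lemma step (N : ℕ) (hN : 2 ≤ N) (σ : Fin N → ℝ) (a c : Fin (N - 1)) :
    (∑ m : Fin (N - 1), RM N a m * AM N σ m c) =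
      ∑ p : Fin N, dd N a p * (bb N c p * σ p ^ 2) := by
  have h1 : ∀ m, RM N a m * AM N σ m c =
      ∑ p : Fin N, (RM N a m * bb N m p) * (bb N c p * σ p ^ 2) := by
    intro m; rw [A_eq N σ m c, Finset.mul_sum]
    exact Finset.sum_congr rfl fun p _ => by ring
  rw [Finset.sum_congr rfl fun m _ => h1 m, Finset.sum_comm]
  refine Finset.sum_congr rfl fun p _ => ?_
  rw [← Finset.sum_mul, L1 N hN a p]

lemma trace_eq (N : ℕ) (hN : 2 ≤ N) (σ : Fin N → ℝ) :
    Matrix.trace (RM N * AM N σ) = 2 * ((N : ℝ) - 1) / N * ∑ p : Fin N, σ p ^ 2 := by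
  rw [Matrix.trace]
  simp only [Matrix.diag_apply, Matrix.mul_apply]
  rw [Finset.sum_congr rfl fun i _ => step N hN σ i i, Finset.sum_comm, Finset.mul_sum]
  refine Finset.sum_congr rfl fun p _ => ?_
  have h2 : ∀ i : Fin (N - 1), dd N i p * (bb N i p * σ p ^ 2) =
      (bb N i p * dd N i p) * σ p ^ 2 := fun i => by ring
  rw [Finset.sum_congr rfl fun i _ => h2 i, ← Finset.sum_mul, L2 N hN p]

lemma prod_eq (N : ℕ) (hN : 2 ≤ N) (σ : Fin N → ℝ) (k l : Fin (N - 1)) :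
    (RM N * AM N σ * RM N) k l = ∑ p : Fin N, dd N k p * dd N l p * σ p ^ 2 := by
  simp only [Matrix.mul_apply]
  rw [Finset.sum_congr rfl fun j _ => congrArg (· * RM N j l) (step N hN σ k j),
    Finset.sum_congr rfl fun j (_ : j ∈ Finset.univ) => Finset.sum_mul _ _ (RM N j l),
    Finset.sum_comm]
  refine Finset.sum_congr rfl fun p _ => ?_
  have h2 : ∀ j : Fin (N - 1), dd N k p * (bb N j p * σ p ^ 2) * RM N j l =
      dd N k p * σ p ^ 2 * (bb N j p * RM N j l) := fun j => by ring
  rw [Finset.sum_congr rfl fun j _ => h2 j, ← Finset.mul_sum, L1' N hN l p]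
  ring

lemma main (N : ℕ) (hN : 2 ≤ N) (σ : Fin N → ℝ) (k l : Fin (N - 1)) (hkl : k ≤ l) :
    Matrix.trace (RM N * AM N σ) - 2 * (RM N * AM N σ * RM N) k l / RM N k l =
      (2 * ((N : ℝ) - 1) * ((k.1 : ℝ) + 1) - 4 * ((N : ℝ) - ((k.1 : ℝ) + 1))) /
          (((k.1 : ℝ) + 1) * N) *
          (∑ p ∈ Finset.univ.filter fun p : Fin N => p.1 ≤ k.1, σ p ^ 2)
        + 2 * ((N : ℝ) + 1) / N *
          (∑ p ∈ Finset.univ.filter fun p : Fin N => k.1 < p.1 ∧ p.1 ≤ l.1, σ p ^ 2)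
        + (2 * ((N : ℝ) - 1) * ((N : ℝ) - ((l.1 : ℝ) + 1)) - 4 * ((l.1 : ℝ) + 1)) /
          (((N : ℝ) - ((l.1 : ℝ) + 1)) * N) *
          (∑ p ∈ Finset.univ.filter fun p : Fin N => l.1 < p.1, σ p ^ 2) := by
  have hkl' : k.1 ≤ l.1 := hkl
  have hk : k.1 < N - 1 := k.isLt
  have hl : l.1 < N - 1 := l.isLt
  have hsplit : ∀ f : Fin N → ℝ, (∑ p : Fin N, f p) =
      (∑ p ∈ Finset.univ.filter fun p : Fin N => p.1 ≤ k.1, f p)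
      + (∑ p ∈ Finset.univ.filter fun p : Fin N => k.1 < p.1 ∧ p.1 ≤ l.1, f p)
      + (∑ p ∈ Finset.univ.filter fun p : Fin N => l.1 < p.1, f p) := by
    intro f
    have e1 : (Finset.univ.filter fun p : Fin N => k.1 < p.1 ∧ p.1 ≤ l.1) =
        (Finset.univ.filter fun p : Fin N => ¬ p.1 ≤ k.1).filter fun p => p.1 ≤ l.1 := by
      rw [Finset.filter_filter]
      exact Finset.filter_congr fun p _ => by constructor <;> intro h <;> omega
    have e2 : (Finset.univ.filter fun p : Fin N => l.1 < p.1) =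
        (Finset.univ.filter fun p : Fin N => ¬ p.1 ≤ k.1).filter fun p => ¬ p.1 ≤ l.1 := by
      rw [Finset.filter_filter]
      exact Finset.filter_congr fun p _ => by constructor <;> intro h <;> omega
    rw [e1, e2, add_assoc, Finset.sum_filter_add_sum_filter_not
      ((Finset.univ.filter fun p : Fin N => ¬ p.1 ≤ k.1)) (fun p => p.1 ≤ l.1) f,
      Finset.sum_filter_add_sum_filter_not Finset.univ (fun p : Fin N => p.1 ≤ k.1) f]
  have hreg1 : (∑ p ∈ Finset.univ.filter fun p : Fin N => p.1 ≤ k.1,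
      dd N k p * dd N l p * σ p ^ 2) =
      (2 * ((N : ℝ) - ((k.1 : ℝ) + 1)) / N) * (2 * ((N : ℝ) - ((l.1 : ℝ) + 1)) / N) *
      (∑ p ∈ Finset.univ.filter fun p : Fin N => p.1 ≤ k.1, σ p ^ 2) := by
    rw [Finset.mul_sum]
    refine Finset.sum_congr rfl fun p hp => ?_
    have h := (Finset.mem_filter.mp hp).2
    simp only [dd]
    rw [if_pos h, if_pos (le_trans h hkl')]
  have hreg2 : (∑ p ∈ Finset.univ.filter fun p : Fin N => k.1 < p.1 ∧ p.1 ≤ l.1,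
      dd N k p * dd N l p * σ p ^ 2) =
      (-(2 * ((k.1 : ℝ) + 1) / N) * (2 * ((N : ℝ) - ((l.1 : ℝ) + 1)) / N)) *
      (∑ p ∈ Finset.univ.filter fun p : Fin N => k.1 < p.1 ∧ p.1 ≤ l.1, σ p ^ 2) := by
    rw [Finset.mul_sum]
    refine Finset.sum_congr rfl fun p hp => ?_
    have h := (Finset.mem_filter.mp hp).2
    simp only [dd]
    rw [if_neg (by omega), if_pos h.2]
  have hreg3 : (∑ p ∈ Finset.univ.filter fun p : Fin N => l.1 < p.1,
      dd N k p * dd N l p * σ p ^ 2) =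
      ((2 * ((k.1 : ℝ) + 1) / N) * (2 * ((l.1 : ℝ) + 1) / N)) *
      (∑ p ∈ Finset.univ.filter fun p : Fin N => l.1 < p.1, σ p ^ 2) := by
    rw [Finset.mul_sum]
    refine Finset.sum_congr rfl fun p hp => ?_
    have h := (Finset.mem_filter.mp hp).2
    simp only [dd]
    rw [if_neg (by omega), if_neg (by omega)]
    push_cast; ring
  have hrho : RM N k l = 2 * ((k.1 : ℝ) + 1) * ((N : ℝ) - ((l.1 : ℝ) + 1)) / N := by
    rw [rho_val]
    rcases eq_or_lt_of_le hkl' with he | hlt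
    · rw [if_pos (by omega)]
      rw [show ((l.1 : ℝ)) = (k.1 : ℝ) from by exact_mod_cast he.symm]
    · rw [if_neg (by omega)]
  have hN0 : (N : ℝ) ≠ 0 := Nat.cast_ne_zero.mpr (by omega)
  have hK0 : ((k.1 : ℝ) + 1) ≠ 0 := by positivity
  have hLN : ((l.1 : ℝ) + 1) < N := by exact_mod_cast (by omega : l.1 + 1 < N)
  have hNL : (N : ℝ) - ((l.1 : ℝ) + 1) ≠ 0 := ne_of_gt (by linarith)
  rw [trace_eq N hN σ, prod_eq N hN σ k l, hrho,
    hsplit (fun p => σ p ^ 2), hsplit (fun p => dd N k p * dd N l p * σ p ^ 2),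
    hreg1, hreg2, hreg3]
  field_simp
  ring

end CklAux


/-- Explicit formula for `c_{k,l}(σ) := tr(ρA) − 2 (ρAρ)_{kl} / ρ_{kl}`: for
`1 ≤ k ≤ l ≤ N−1`,
`c_{k,l}(σ) = ((2(N−1)k − 4(N−k))/(kN)) ∑_{p≤k} σ_p² + (2(N+1)/N) ∑_{k<p≤l} σ_p²
            + ((2(N−1)(N−l) − 4l)/((N−l)N)) ∑_{p>l} σ_p²`. -/
theorem ckl_formula (N : ℕ) (hN : 2 ≤ N) (σ : Fin N → ℝ) (hσ : ∀ i, 0 < σ i) :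
    let A : Matrix (Fin (N - 1)) (Fin (N - 1)) ℝ := fun i j =>
      if i = j then
        σ ⟨i.1, by have := i.isLt; omega⟩ ^ 2 + σ ⟨i.1 + 1, by have := i.isLt; omega⟩ ^ 2
      else if i.1 + 1 = j.1 ∨ j.1 + 1 = i.1 then
        -σ ⟨max i.1 j.1, by have := i.isLt; have := j.isLt; omega⟩ ^ 2
      else 0
    let ρ : Matrix (Fin (N - 1)) (Fin (N - 1)) ℝ := fun i j =>
      2 * (min (i.1 + 1) (j.1 + 1) : ℕ) * ((N : ℝ) - (max (i.1 + 1) (j.1 + 1) : ℕ)) / N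
    ∀ k l : Fin (N - 1), k ≤ l →
      Matrix.trace (ρ * A) - 2 * (ρ * A * ρ) k l / ρ k l =
        (2 * ((N : ℝ) - 1) * ((k.1 : ℝ) + 1) - 4 * ((N : ℝ) - ((k.1 : ℝ) + 1))) /
            (((k.1 : ℝ) + 1) * N) *
            (∑ p ∈ Finset.univ.filter fun p : Fin N => p.1 ≤ k.1, σ p ^ 2)
          + 2 * ((N : ℝ) + 1) / N *
            (∑ p ∈ Finset.univ.filter fun p : Fin N => k.1 < p.1 ∧ p.1 ≤ l.1, σ p ^ 2)
          + (2 * ((N : ℝ) - 1) * ((N : ℝ) - ((l.1 : ℝ) + 1)) - 4 * ((l.1 : ℝ) + 1)) /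
            (((N : ℝ) - ((l.1 : ℝ) + 1)) * N) *
            (∑ p ∈ Finset.univ.filter fun p : Fin N => l.1 < p.1, σ p ^ 2) := by
  intro A ρ k l hkl
  have hA : A = CklAux.AM N σ := rfl
  have hρ : ρ = CklAux.RM N := rfl
  rw [hA, hρ]
  exact CklAux.main N hN σ k l hkl
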